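/- If an n-diagram D contains a set of p chords that are pairwise parallel (no two of them cross), then b(D) ≥ p + 1. -/

import Mathlib

/-- A chord word on `m` strands: a list of generators `A(i,j)` recorded as pairs `(i,j)`
with `1 ≤ i < j ≤ m`. -/
def IsChordWord (m : ℕ) (W : List (ℕ × ℕ)) : Prop :=
  ∀ p ∈ W, 1 ≤ p.1 ∧ p.1 < p.2 ∧ p.2 ≤ m

/-- The standard name read from a chord word `W` on `m` strands: concatenate, for each
strand `s = 1, …, m`, the increasing enumeration of the (1-based) indices `r` of the
generators of `W` having `s` as an endpoint. -/
def standardName (m : ℕ) (W : List (ℕ × ℕ)) : List ℕ :=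
  (List.range m).flatMap fun s =>
    ((List.range W.length).filter
      (fun r => decide ((W.getD r (0, 0)).1 = s + 1 ∨ (W.getD r (0, 0)).2 = s + 1))).map
      (· + 1)

/-- `N` is a name of an `n`-diagram: a list of length `2n` over `{1, …, n}` in which
every label occurs exactly twice. -/
def IsName (n : ℕ) (N : List ℕ) : Prop :=
  N.length = 2 * n ∧ ∀ r, 1 ≤ r → r ≤ n → N.count r = 2

/-- Two names represent the same `n`-diagram: one is obtained from the other by a cyclic
rotation followed by a relabeling (a bijection of `{1, …, n}` applied to all entries). -/
def SameDiagram (n : ℕ) (N M : List ℕ) : Prop :=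
  ∃ (k : ℕ) (σ : Equiv.Perm ℕ),
    (∀ x, 1 ≤ x → x ≤ n → 1 ≤ σ x ∧ σ x ≤ n) ∧ M = (N.rotate k).map σ

/-- A chord word `W` on `m` strands is a braiding of the `n`-diagram named by `N` if the
standard name read from `W` is a name of that diagram. -/
def IsBraiding (n m : ℕ) (W : List (ℕ × ℕ)) (N : List ℕ) : Prop :=
  IsChordWord m W ∧ SameDiagram n (standardName m W) N

/-- The braid index of the diagram named by `N`: the least number `m ≥ 1` of strands of
any braiding of the diagram. -/
noncomputable def braidIndex (n : ℕ) (N : List ℕ) : ℕ :=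
  sInf {m | 1 ≤ m ∧ ∃ W, IsBraiding n m W N}

/-- The increasing list of the (0-based) positions at which `x` occurs in `N`. -/
def positionsOf (N : List ℕ) (x : ℕ) : List ℕ :=
  (List.range N.length).filter fun p => decide (N.getD p 0 = x)

/-- The canonical braiding of a name `N` of an `n`-diagram: the chord word
`A(i_1,j_1) ⋯ A(i_n,j_n)` on `2n` strands, where `i_r < j_r` are the two (1-based)
positions at which the label `r` occurs in `N`. -/
def canonicalBraiding (n : ℕ) (N : List ℕ) : List (ℕ × ℕ) :=
  (List.range n).map fun r =>
    ((positionsOf N (r + 1)).getD 0 0 + 1, (positionsOf N (r + 1)).getD 1 0 + 1)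

/-- Commutation move: interchange two adjacent generators with disjoint endpoint sets. -/
def CommMove (V W : List (ℕ × ℕ)) : Prop :=
  ∃ (U V' : List (ℕ × ℕ)) (i j k l : ℕ),
    i ≠ k ∧ i ≠ l ∧ j ≠ k ∧ j ≠ l ∧
    V = U ++ (i, j) :: (k, l) :: V' ∧ W = U ++ (k, l) :: (i, j) :: V'

/-- Cyclic permutation move on `m` strands: replace `W'·A(i,j)` by `A(i+1,j+1)·W'` when
`j < m`, and `W'·A(i,m)` by `A(1,i+1)·W'`. -/
def CycMove (m : ℕ) (V W : List (ℕ × ℕ)) : Prop :=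
  (∃ (U : List (ℕ × ℕ)) (i j : ℕ), j < m ∧ V = U ++ [(i, j)] ∧ W = (i + 1, j + 1) :: U) ∨
  (∃ (U : List (ℕ × ℕ)) (i : ℕ), V = U ++ [(i, m)] ∧ W = (1, i + 1) :: U)

/-- Stabilization move: replace the word `U·A(i,m)` on `m` strands by `U·A(i,m+1)` on
`m+1` strands. Words are recorded together with their number of strands. -/
def StabMove (p q : ℕ × List (ℕ × ℕ)) : Prop :=
  ∃ (U : List (ℕ × ℕ)) (i m : ℕ),
    p = (m, U ++ [(i, m)]) ∧ q = (m + 1, U ++ [(i, m + 1)])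

/-- A single move on chord-words-with-strand-count: a commutation move, a cyclic
permutation move (in either direction), or a stabilization move (in either direction). -/
def Move (p q : ℕ × List (ℕ × ℕ)) : Prop :=
  (p.1 = q.1 ∧ (CommMove p.2 q.2 ∨ CycMove p.1 p.2 q.2 ∨ CycMove p.1 q.2 p.2)) ∨
    StabMove p q ∨ StabMove q p

/-- Two chord-words-with-strand-count are related by a finite sequence of commutation,
cyclic permutation and stabilization moves. -/
def MoveEquiv (p q : ℕ × List (ℕ × ℕ)) : Prop :=
  Relation.ReflTransGen Move p q

/-- A commutation or cyclic permutation move (in either direction) on `m` strands. -/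
def CCMove (m : ℕ) (V W : List (ℕ × ℕ)) : Prop :=
  CommMove V W ∨ CycMove m V W ∨ CycMove m W V

/-- Related by a finite sequence of commutation and cyclic permutation moves. -/
def CCEquiv (m : ℕ) : List (ℕ × ℕ) → List (ℕ × ℕ) → Prop :=
  Relation.ReflTransGen (CCMove m)

/-- Cyclic equivalence on `m` strands: related by a finite sequence of cyclic
permutation moves. -/
def CycEquiv (m : ℕ) : List (ℕ × ℕ) → List (ℕ × ℕ) → Prop :=
  Relation.ReflTransGen fun V W => CycMove m V W ∨ CycMove m W V

/-- Decrease by one every strand index greater than `j`. -/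
def shiftGt (j : ℕ) (W : List (ℕ × ℕ)) : List (ℕ × ℕ) :=
  W.map fun p => ((if j < p.1 then p.1 - 1 else p.1), (if j < p.2 then p.2 - 1 else p.2))

/-- Decrease by one every strand index greater than or equal to `j`. -/
def shiftGe (j : ℕ) (W : List (ℕ × ℕ)) : List (ℕ × ℕ) :=
  W.map fun p => ((if j ≤ p.1 then p.1 - 1 else p.1), (if j ≤ p.2 then p.2 - 1 else p.2))

/-- Decreasing stabilization: replace `U·A(i,j)·V` on `m` strands (where `i < j - 1`,
the strand index `j` does not occur in `U`, and `j - 1` does not occur in `V`) by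
`U'·A(i,j-1)·V'` on `m - 1` strands, where `U'` is `U` with every index `> j` decreased
by one and `V'` is `V` with every index `≥ j` decreased by one. -/
def DecStab (p q : ℕ × List (ℕ × ℕ)) : Prop :=
  ∃ (U V : List (ℕ × ℕ)) (i j : ℕ),
    i + 1 < j ∧
    (∀ x ∈ U, x.1 ≠ j ∧ x.2 ≠ j) ∧
    (∀ x ∈ V, x.1 ≠ j - 1 ∧ x.2 ≠ j - 1) ∧
    p.2 = U ++ (i, j) :: V ∧
    q = (p.1 - 1, shiftGt j U ++ (i, j - 1) :: shiftGe j V)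

/-- The blow-up of a name `N` with weights `w`: both occurrences of each label `r` are
replaced by the same ordered block of `w r` distinct fresh labels. -/
def blowUp (w : ℕ → ℕ) (N : List ℕ) : List ℕ :=
  N.flatMap fun r => (List.range (w r)).map fun t => (∑ s ∈ Finset.Ico 1 r, w s) + t + 1

/-- The chord word obtained from `Wa` by repeating its `r`-th generator `w r` times
consecutively, in place. -/
def powerWord (w : ℕ → ℕ) (Wa : List (ℕ × ℕ)) : List (ℕ × ℕ) :=
  (List.range Wa.length).flatMap fun r => List.replicate (w (r + 1)) (Wa.getD r (0, 0))

/-- The diagram named by `N` is amalgamated: no name of the diagram is (cyclically) of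
the form `x y U x y V` with `x ≠ y`. -/
def Amalgamated (n : ℕ) (N : List ℕ) : Prop :=
  ¬∃ (x y : ℕ) (U V : List ℕ), x ≠ y ∧ SameDiagram n N (x :: y :: (U ++ x :: y :: V))

/-- The chords labeled `r` and `s` cross in the name `N`: their occurrences interleave
cyclically. -/
def Crosses (N : List ℕ) (r s : ℕ) : Prop :=
  ∃ k, [r, s, r, s].Sublist (N.rotate k)

def sBlock (W : List (ℕ × ℕ)) (s : ℕ) : List ℕ :=
  ((List.range W.length).filter
    (fun r => decide ((W.getD r (0, 0)).1 = s + 1 ∨ (W.getD r (0, 0)).2 = s + 1))).map (· + 1)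

lemma standardName_eq_flatMap (m : ℕ) (W : List (ℕ × ℕ)) :
    standardName m W = (List.Ico 0 m).flatMap (sBlock W) := by
  rw [List.Ico.zero_bot]; rfl

lemma sBlock_pairwise (W : List (ℕ × ℕ)) (s : ℕ) : (sBlock W s).Pairwise (· < ·) := by
  exact List.Pairwise.map _ (fun a b (h : a < b) => by omega)
    ((List.pairwise_lt_range).filter _)

lemma pair_sublist_of_sorted {l : List ℕ} (h : l.Pairwise (· < ·)) {v w : ℕ}
    (hv : v ∈ l) (hw : w ∈ l) (hvw : v < w) : [v, w].Sublist l := by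
  induction l with
  | nil => simp at hv
  | cons x t ih =>
    rcases List.pairwise_cons.1 h with ⟨hx, ht⟩
    rcases List.mem_cons.1 hv with hv2 | hv2
    · subst hv2
      have hw' : w ∈ t := by
        rcases List.mem_cons.1 hw with hw2 | hw2
        · omega
        · exact hw2
      exact (List.singleton_sublist.2 hw').cons₂ v
    · have hw' : w ∈ t := by
        rcases List.mem_cons.1 hw with hw2 | hw2
        · exact absurd (hx v hv2) (by omega)
        · exact hw2
      exact (ih ht hv2 hw').cons x

section
variable (f : ℕ → List ℕ)

lemma single_flatMap {b1 b c : ℕ} {v : ℕ} (h1 : b1 ≤ b) (h2 : b < c) (hv : v ∈ f b) :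
    [v].Sublist ((List.Ico b1 c).flatMap f) :=
  List.singleton_sublist.2 (List.mem_flatMap.2 ⟨b, List.Ico.mem.2 ⟨h1, h2⟩, hv⟩)

lemma prefix_flatMap {b c : ℕ} (h : b < c) :
    (f b).Sublist ((List.Ico b c).flatMap f) := by
  have : List.Ico b c = List.Ico b (b + 1) ++ List.Ico (b + 1) c :=
    (List.Ico.append_consecutive (by omega) (by omega)).symm
  rw [this, List.flatMap_append, List.Ico.succ_singleton]
  simp only [List.flatMap_cons, List.flatMap_nil, List.append_nil]
  exact List.sublist_append_left _ _

lemma pair_flatMap {b1 b2 c : ℕ} {v1 v2 : ℕ} (h12 : b1 ≤ b2) (h2 : b2 < c)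
    (m1 : v1 ∈ f b1) (m2 : v2 ∈ f b2) (heq : b1 = b2 → [v1, v2].Sublist (f b1)) :
    [v1, v2].Sublist ((List.Ico b1 c).flatMap f) := by
  rcases eq_or_lt_of_le h12 with rfl | hlt
  · exact (heq rfl).trans (prefix_flatMap f h2)
  · have : List.Ico b1 c = List.Ico b1 b2 ++ List.Ico b2 c :=
      (List.Ico.append_consecutive (by omega) (by omega)).symm
    rw [this, List.flatMap_append]
    exact (single_flatMap f le_rfl hlt m1).append (single_flatMap f le_rfl h2 m2)

lemma quadA {b1 b2 b3 b4 m : ℕ} {v1 v2 v3 v4 : ℕ}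
    (h12 : b1 ≤ b2) (h23 : b2 < b3) (h34 : b3 ≤ b4) (h4 : b4 < m)
    (m1 : v1 ∈ f b1) (m2 : v2 ∈ f b2) (m3 : v3 ∈ f b3) (m4 : v4 ∈ f b4)
    (e12 : b1 = b2 → [v1, v2].Sublist (f b1)) (e34 : b3 = b4 → [v3, v4].Sublist (f b3)) :
    [v1, v2, v3, v4].Sublist ((List.Ico b1 m).flatMap f) := by
  have : List.Ico b1 m = List.Ico b1 b3 ++ List.Ico b3 m :=
    (List.Ico.append_consecutive (by omega) (by omega)).symm
  rw [this, List.flatMap_append]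
  exact (pair_flatMap f h12 h23 m1 m2 e12).append (pair_flatMap f h34 h4 m3 m4 e34)

lemma quadB {b1 b2 b3 b4 m : ℕ} {v1 v2 v3 v4 : ℕ}
    (h12 : b1 < b2) (h23 : b2 ≤ b3) (h34 : b3 < b4) (h4 : b4 < m)
    (m1 : v1 ∈ f b1) (m2 : v2 ∈ f b2) (m3 : v3 ∈ f b3) (m4 : v4 ∈ f b4)
    (e23 : b2 = b3 → [v2, v3].Sublist (f b2)) :
    [v1, v2, v3, v4].Sublist ((List.Ico b1 m).flatMap f) := by
  have : List.Ico b1 m = List.Ico b1 b2 ++ (List.Ico b2 b4 ++ List.Ico b4 m) := by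
    rw [List.Ico.append_consecutive (by omega : b2 ≤ b4) (by omega : b4 ≤ m),
      List.Ico.append_consecutive (by omega : b1 ≤ b2) (by omega : b2 ≤ m)]
  rw [this, List.flatMap_append, List.flatMap_append]
  have hA : [v1].Sublist ((List.Ico b1 b2).flatMap f) := single_flatMap f le_rfl h12 m1
  have hB : [v2, v3].Sublist ((List.Ico b2 b4).flatMap f) :=
    pair_flatMap f h23 h34 m2 m3 e23
  have hC : [v4].Sublist ((List.Ico b4 m).flatMap f) := single_flatMap f le_rfl h4 m4
  exact hA.append (hB.append hC)

end

lemma mem_sBlock {W : List (ℕ × ℕ)} {r e : ℕ} (hr1 : 1 ≤ r) (hrW : r - 1 < W.length)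
    (he : (W.getD (r - 1) (0, 0)).1 = e ∨ (W.getD (r - 1) (0, 0)).2 = e) (he1 : 1 ≤ e) :
    r ∈ sBlock W (e - 1) := by
  simp only [sBlock, List.mem_map, List.mem_filter, List.mem_range]
  refine ⟨r - 1, ⟨hrW, ?_⟩, by omega⟩
  have : e - 1 + 1 = e := by omega
  rw [this]
  simpa using he

lemma pair_sBlock {W : List (ℕ × ℕ)} {r s b : ℕ} (hr : r ∈ sBlock W b) (hs : s ∈ sBlock W b)
    (hrs : r < s) : [r, s].Sublist (sBlock W b) :=
  pair_sublist_of_sorted (sBlock_pairwise W b) hr hs hrs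

lemma crosses_of_sublist {m : ℕ} {W : List (ℕ × ℕ)} {b x y : ℕ} (hb : b ≤ m)
    (h : [x, y, x, y].Sublist ((List.Ico b m).flatMap (sBlock W))) :
    Crosses (standardName m W) x y := by
  refine ⟨((List.Ico 0 b).flatMap (sBlock W)).length, ?_⟩
  rw [standardName_eq_flatMap, ← List.Ico.append_consecutive (Nat.zero_le b) hb,
    List.flatMap_append]
  rw [List.rotate_eq_drop_append_take (by simp), List.drop_left, List.take_left]
  exact h.trans (List.sublist_append_left _ _)

lemma crosses_of_xor {m : ℕ} {W : List (ℕ × ℕ)} (hW : IsChordWord m W) {r s : ℕ}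
    (hr1 : 1 ≤ r) (hrW : r - 1 < W.length) (hs1 : 1 ≤ s) (hsW : s - 1 < W.length)
    (hrs : r < s)
    (hx : ¬(((W.getD (r - 1) (0, 0)).1 ≤ (W.getD (s - 1) (0, 0)).1 ∧
        (W.getD (s - 1) (0, 0)).1 < (W.getD (r - 1) (0, 0)).2) ↔
      ((W.getD (r - 1) (0, 0)).1 ≤ (W.getD (s - 1) (0, 0)).2 ∧
        (W.getD (s - 1) (0, 0)).2 < (W.getD (r - 1) (0, 0)).2))) :
    Crosses (standardName m W) r s ∨ Crosses (standardName m W) s r := by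
  set a := (W.getD (r - 1) (0, 0)).1 with ha
  set b := (W.getD (r - 1) (0, 0)).2 with hb
  set c := (W.getD (s - 1) (0, 0)).1 with hc
  set d := (W.getD (s - 1) (0, 0)).2 with hd
  have hWr : 1 ≤ a ∧ a < b ∧ b ≤ m := by
    rw [ha, hb, List.getD_eq_getElem _ _ hrW]
    exact hW _ (List.getElem_mem hrW)
  have hWs : 1 ≤ c ∧ c < d ∧ d ≤ m := by
    rw [hc, hd, List.getD_eq_getElem _ _ hsW]
    exact hW _ (List.getElem_mem hsW)
  obtain ⟨ha1, hab, hbm⟩ := hWr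
  obtain ⟨hc1, hcd, hdm⟩ := hWs
  have mra : r ∈ sBlock W (a - 1) := mem_sBlock hr1 hrW (Or.inl rfl) ha1
  have mrb : r ∈ sBlock W (b - 1) := mem_sBlock hr1 hrW (Or.inr rfl) (by omega)
  have msc : s ∈ sBlock W (c - 1) := mem_sBlock hs1 hsW (Or.inl rfl) hc1
  have msd : s ∈ sBlock W (d - 1) := mem_sBlock hs1 hsW (Or.inr rfl) (by omega)
  by_cases h1 : a ≤ c ∧ c < b
  · -- then ¬(a ≤ d ∧ d < b); since d > c ≥ a we get b ≤ d
    have h2 : ¬(a ≤ d ∧ d < b) := fun h => hx ⟨fun _ => h, fun _ => h1⟩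
    have hbd : b ≤ d := by omega
    left
    apply crosses_of_sublist (W := W) (by omega : a - 1 ≤ m)
    apply quadA (sBlock W) (by omega : a - 1 ≤ c - 1) (by omega : c - 1 < b - 1)
      (by omega : b - 1 ≤ d - 1) (by omega : d - 1 < m) mra msc mrb msd
    · intro he
      have : a = c := by omega
      exact pair_sBlock mra (this ▸ msc) hrs
    · intro he
      have : b = d := by omega
      exact pair_sBlock mrb (this ▸ msd) hrs
  · -- then a ≤ d ∧ d < b; and c < a
    have h2 : a ≤ d ∧ d < b := by
      rcases Decidable.em (a ≤ d ∧ d < b) with h | h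
      · exact h
      · exact absurd ⟨fun hh => absurd hh h1, fun hh => absurd hh h⟩ hx
    have hca : c < a := by omega
    right
    apply crosses_of_sublist (W := W) (by omega : c - 1 ≤ m)
    apply quadB (sBlock W) (by omega : c - 1 < a - 1) (by omega : a - 1 ≤ d - 1)
      (by omega : d - 1 < b - 1) (by omega : b - 1 < m) msc mra msd mrb
    intro he
    have : a = d := by omega
    exact pair_sBlock mra (this ▸ msd) hrs

lemma crosses_transfer {M Nl : List ℕ} {k : ℕ} {σ : Equiv.Perm ℕ}
    (h : Nl = (M.rotate k).map σ) {r s : ℕ} (hc : Crosses M r s) :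
    Crosses Nl (σ r) (σ s) := by
  obtain ⟨jj, hsub⟩ := hc
  have hM : M ≠ [] := by
    rintro rfl
    simp [List.rotate_nil] at hsub
  have hL0 : 0 < M.length := List.length_pos_iff.2 hM
  refine ⟨jj + (M.length - k % M.length), ?_⟩
  have h1 : Nl.rotate (jj + (M.length - k % M.length)) =
      (M.rotate (k + (jj + (M.length - k % M.length)))).map σ := by
    rw [h, ← List.map_rotate, List.rotate_rotate]
  rw [h1]
  have h2 : M.rotate (k + (jj + (M.length - k % M.length))) = M.rotate jj := by
    conv_lhs => rw [← List.rotate_mod]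
    conv_rhs => rw [← List.rotate_mod]
    congr 1
    have hdm := Nat.div_add_mod k M.length
    have hml : k % M.length < M.length := Nat.mod_lt _ hL0
    have hexp : M.length * (k / M.length + 1) = M.length * (k / M.length) + M.length :=
      by ring
    have : k + (jj + (M.length - k % M.length)) = jj + M.length * (k / M.length + 1) := by
      omega
    rw [this, Nat.add_mul_mod_self_left]
  rw [h2]
  have := hsub.map σ
  simpa using this

lemma core_count (i j : ℕ → ℕ) : ∀ (K : ℕ) (F T : Finset ℕ), F.card ≤ K →
    (∀ r ∈ F, i r ∈ T ∧ j r ∈ T ∧ i r < j r) →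
    (∀ r ∈ F, ∀ s ∈ F, r < s → ((i r ≤ i s ∧ i s < j r) ↔ (i r ≤ j s ∧ j s < j r))) →
    F.card ≤ T.card - 1 := by
  intro K
  induction K with
  | zero => intro F T hc _ _; omega
  | succ K ih =>
    intro F T hcard hbounds hpar
    rcases F.eq_empty_or_nonempty with rfl | hne
    · simp
    set c := F.min' hne with hcdef
    have hcF : c ∈ F := F.min'_mem hne
    obtain ⟨hicT, hjcT, hijc⟩ := hbounds c hcF
    have hlt : ∀ d ∈ F.erase c, c < d := by
      intro d hd
      obtain ⟨hdne, hdF⟩ := Finset.mem_erase.1 hd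
      exact lt_of_le_of_ne (F.min'_le d hdF) (Ne.symm hdne)
    have hiff : ∀ d ∈ F.erase c, ((i c ≤ i d ∧ i d < j c) ↔ (i c ≤ j d ∧ j d < j c)) :=
      fun d hd => hpar c hcF d (Finset.mem_erase.1 hd).2 (hlt d hd)
    set P : ℕ → Prop := fun x => i c ≤ x ∧ x < j c with hP
    set F1 := (F.erase c).filter (fun d => P (i d)) with hF1
    set F2 := (F.erase c).filter (fun d => ¬ P (i d)) with hF2
    set T1 := T.filter P with hT1
    set T2 := T.filter (fun x => ¬ P x) with hT2
    have hsubF : F.erase c ⊆ F := Finset.erase_subset _ _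
    have hb1 : ∀ r ∈ F1, i r ∈ T1 ∧ j r ∈ T1 ∧ i r < j r := by
      intro r hr
      obtain ⟨hrE, hrP⟩ := Finset.mem_filter.1 hr
      obtain ⟨hiT, hjT, hij⟩ := hbounds r (hsubF hrE)
      refine ⟨Finset.mem_filter.2 ⟨hiT, hrP⟩, Finset.mem_filter.2 ⟨hjT, ?_⟩, hij⟩
      exact (hiff r hrE).1 hrP
    have hb2 : ∀ r ∈ F2, i r ∈ T2 ∧ j r ∈ T2 ∧ i r < j r := by
      intro r hr
      obtain ⟨hrE, hrP⟩ := Finset.mem_filter.1 hr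
      obtain ⟨hiT, hjT, hij⟩ := hbounds r (hsubF hrE)
      refine ⟨Finset.mem_filter.2 ⟨hiT, hrP⟩, Finset.mem_filter.2 ⟨hjT, ?_⟩, hij⟩
      exact fun hq => hrP ((hiff r hrE).2 hq)
    have hp1 : ∀ r ∈ F1, ∀ s ∈ F1, r < s →
        ((i r ≤ i s ∧ i s < j r) ↔ (i r ≤ j s ∧ j s < j r)) := by
      intro r hr s hs hrs
      exact hpar r (hsubF (Finset.mem_filter.1 hr).1) s (hsubF (Finset.mem_filter.1 hs).1) hrs
    have hp2 : ∀ r ∈ F2, ∀ s ∈ F2, r < s →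
        ((i r ≤ i s ∧ i s < j r) ↔ (i r ≤ j s ∧ j s < j r)) := by
      intro r hr s hs hrs
      exact hpar r (hsubF (Finset.mem_filter.1 hr).1) s (hsubF (Finset.mem_filter.1 hs).1) hrs
    have hcardE : (F.erase c).card + 1 = F.card := Finset.card_erase_add_one hcF
    have hsplitF : F1.card + F2.card = (F.erase c).card :=
      Finset.card_filter_add_card_filter_not _
    have hsplitT : T1.card + T2.card = T.card :=
      Finset.card_filter_add_card_filter_not _
    have hT1pos : 1 ≤ T1.card := by
      refine Finset.card_pos.2 ⟨i c, Finset.mem_filter.2 ⟨hicT, ?_⟩⟩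
      exact ⟨le_rfl, hijc⟩
    have hT2pos : 1 ≤ T2.card := by
      refine Finset.card_pos.2 ⟨j c, Finset.mem_filter.2 ⟨hjcT, ?_⟩⟩
      exact fun h => lt_irrefl _ h.2
    have h1 : F1.card ≤ T1.card - 1 := ih F1 T1 (by omega) hb1 hp1
    have h2 : F2.card ≤ T2.card - 1 := ih F2 T2 (by omega) hb2 hp2
    have hc1 : F1.card ≤ (F.erase c).card := Finset.card_filter_le _ _
    have hc2 : F2.card ≤ (F.erase c).card := Finset.card_filter_le _ _
    omega

lemma mem_Icc_of_isName {n : ℕ} {N : List ℕ} (hN : IsName n N) :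
    ∀ x ∈ N, x ∈ Finset.Icc 1 n := by
  classical
  set u := N.toFinset ∪ Finset.Icc 1 n with hu
  have hlen : ∑ x ∈ N.toFinset, N.count x = N.length := by
    simpa using Multiset.toFinset_sum_count_eq (N : Multiset ℕ)
  have h2 : ∑ x ∈ u, N.count x = N.length := by
    rw [← hlen]
    exact (Finset.sum_subset Finset.subset_union_left (fun x _ hx =>
      List.count_eq_zero_of_not_mem (fun hm => hx (List.mem_toFinset.2 hm)))).symm
  have h3 : ∑ x ∈ u \ Finset.Icc 1 n, N.count x + ∑ x ∈ Finset.Icc 1 n, N.count x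
      = ∑ x ∈ u, N.count x := Finset.sum_sdiff Finset.subset_union_right
  have h4 : ∑ x ∈ Finset.Icc 1 n, N.count x = 2 * n := by
    rw [Finset.sum_congr rfl (fun x hx => hN.2 x (Finset.mem_Icc.1 hx).1 (Finset.mem_Icc.1 hx).2)]
    simp [Nat.card_Icc, mul_comm]
  have h5 : ∑ x ∈ u \ Finset.Icc 1 n, N.count x = 0 := by
    have := hN.1
    omega
  intro x hx
  by_contra hxI
  have hxu : x ∈ u \ Finset.Icc 1 n :=
    Finset.mem_sdiff.2 ⟨Finset.subset_union_left (List.mem_toFinset.2 hx), hxI⟩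
  have hz : N.count x = 0 := (Finset.sum_eq_zero_iff.1 h5) x hxu
  exact absurd (List.count_pos_iff.2 hx) (by omega)

lemma length_positionsOf : ∀ (N : List ℕ) (x : ℕ), (positionsOf N x).length = N.count x := by
  intro N
  induction N with
  | nil => intro x; simp [positionsOf]
  | cons a t ih =>
    intro x
    have hcongr : (List.range t.length).filter
        ((fun p => decide ((a :: t).getD p 0 = x)) ∘ Nat.succ) =
        (List.range t.length).filter (fun p => decide (t.getD p 0 = x)) := by
      apply List.filter_congr
      intro q _
      simp [Function.comp, List.getD_cons_succ]
    have : positionsOf (a :: t) x =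
        (List.range (t.length + 1)).filter (fun p => decide ((a :: t).getD p 0 = x)) := rfl
    rw [this, List.range_succ_eq_map, List.filter_cons, List.filter_map, hcongr]
    have hpos : (List.range t.length).filter (fun p => decide (t.getD p 0 = x)) =
        positionsOf t x := rfl
    rw [hpos]
    by_cases hax : a = x
    · simp [hax, List.count_cons, ih]
    · simp [List.getD_cons_zero, hax, List.count_cons, ih]

lemma mem_positionsOf {N : List ℕ} {x p : ℕ} :
    p ∈ positionsOf N x ↔ p < N.length ∧ N.getD p 0 = x := by
  simp [positionsOf]

lemma positionsOf_pairwise (N : List ℕ) (x : ℕ) : (positionsOf N x).Pairwise (· < ·) :=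
  (List.pairwise_lt_range).filter _

lemma positionsOf_two {n : ℕ} {N : List ℕ} (hN : IsName n N) {x : ℕ} (h1 : 1 ≤ x)
    (h2 : x ≤ n) : ∃ q1 q2, q1 < q2 ∧ q2 < N.length ∧ positionsOf N x = [q1, q2] := by
  have hl : (positionsOf N x).length = 2 := by
    rw [length_positionsOf, hN.2 x h1 h2]
  obtain ⟨q1, q2, hq⟩ := List.length_eq_two.1 hl
  have hp := positionsOf_pairwise N x
  rw [hq] at hp
  have h12 : q1 < q2 := by
    simp only [List.pairwise_cons] at hp
    exact hp.1 q2 (by simp)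
  have hmem : q2 ∈ positionsOf N x := by rw [hq]; simp
  exact ⟨q1, q2, h12, (mem_positionsOf.1 hmem).1, hq⟩

lemma filter_range_single {n c : ℕ} (h : c < n) :
    (List.range n).filter (fun t => decide (t = c)) = [c] := by
  induction n with
  | zero => omega
  | succ n ih =>
    rw [List.range_succ, List.filter_append]
    by_cases hc : c < n
    · rw [ih hc]
      have : (List.filter (fun t => decide (t = c)) [n]) = [] := by
        simp
        omega
      rw [this, List.append_nil]
    · have hcn : c = n := by omega
      subst hcn
      have h1 : (List.range c).filter (fun t => decide (t = c)) = [] := by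
        rw [List.filter_eq_nil_iff]
        intro a ha
        simp only [List.mem_range] at ha
        simp
        omega
      rw [h1]
      simp

lemma map_getD_range : ∀ (N : List ℕ), (List.range N.length).map (fun s => N.getD s 0) = N := by
  intro N
  induction N with
  | nil => simp
  | cons a t ih =>
    rw [List.length_cons, List.range_succ_eq_map, List.map_cons, List.map_map]
    have h2 : List.map ((fun s => (a :: t).getD s 0) ∘ Nat.succ) (List.range t.length) = t := by
      have heq : List.map ((fun s => (a :: t).getD s 0) ∘ Nat.succ) (List.range t.length)
          = List.map (fun s => t.getD s 0) (List.range t.length) :=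
        List.map_congr_left (fun q _ => rfl)
      rw [heq, ih]
    show a :: List.map ((fun s => (a :: t).getD s 0) ∘ Nat.succ) (List.range t.length) = a :: t
    rw [h2]

lemma flatMap_congr' {l : List ℕ} {f g : ℕ → List ℕ} (h : ∀ x ∈ l, f x = g x) :
    l.flatMap f = l.flatMap g := by
  induction l with
  | nil => simp
  | cons a t ih =>
    rw [List.flatMap_cons, List.flatMap_cons, h a (by simp), ih (fun x hx => h x (by simp [hx]))]

lemma canonical_length (n : ℕ) (N : List ℕ) : (canonicalBraiding n N).length = n := by
  simp [canonicalBraiding]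

lemma canonical_getD {n : ℕ} {N : List ℕ} {t : ℕ} (ht : t < n) :
    (canonicalBraiding n N).getD t (0, 0) =
      ((positionsOf N (t + 1)).getD 0 0 + 1, (positionsOf N (t + 1)).getD 1 0 + 1) := by
  have ht' : t < (canonicalBraiding n N).length := by rw [canonical_length]; exact ht
  rw [List.getD_eq_getElem _ _ ht']
  simp [canonicalBraiding]

lemma canonical_isChordWord {n : ℕ} {N : List ℕ} (hN : IsName n N) :
    IsChordWord (2 * n + 1) (canonicalBraiding n N) := by
  intro p hp
  simp only [canonicalBraiding, List.mem_map, List.mem_range] at hp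
  obtain ⟨t, ht, rfl⟩ := hp
  obtain ⟨q1, q2, h12, h2len, heq⟩ := positionsOf_two hN (by omega : 1 ≤ t + 1) (by omega)
  rw [heq]
  simp only [List.getD_cons_zero, List.getD_cons_succ]
  have := hN.1
  constructor
  · omega
  · constructor <;> simp <;> omega

lemma sBlock_canonical_eq {n : ℕ} {N : List ℕ} (hN : IsName n N) {s : ℕ} (hs : s < N.length) :
    sBlock (canonicalBraiding n N) s = [N.getD s 0] := by
  set x := N.getD s 0 with hx
  have hxmem : x ∈ N := by
    rw [hx, List.getD_eq_getElem _ _ hs]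
    exact List.getElem_mem hs
  have hxIcc := mem_Icc_of_isName hN x hxmem
  rw [Finset.mem_Icc] at hxIcc
  obtain ⟨hx1, hxn⟩ := hxIcc
  have hpred : ∀ t ∈ List.range (canonicalBraiding n N).length,
      (decide (((canonicalBraiding n N).getD t (0, 0)).1 = s + 1 ∨
        ((canonicalBraiding n N).getD t (0, 0)).2 = s + 1)) = decide (t = x - 1) := by
    intro t htr
    rw [List.mem_range, canonical_length] at htr
    rw [canonical_getD htr]
    obtain ⟨q1, q2, h12, h2len, heq⟩ := positionsOf_two hN (by omega : 1 ≤ t + 1) (by omega)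
    rw [heq]
    simp only [List.getD_cons_zero, List.getD_cons_succ, decide_eq_decide]
    constructor
    · intro h
      have hsmem : s ∈ positionsOf N (t + 1) := by
        rw [heq]
        rcases h with h | h
        · simp; omega
        · simp; omega
      have := (mem_positionsOf.1 hsmem).2
      omega
    · intro h
      have htx : t + 1 = x := by omega
      have hsmem : s ∈ positionsOf N (t + 1) := by
        rw [mem_positionsOf, htx]
        exact ⟨hs, rfl⟩
      rw [heq] at hsmem
      rcases List.mem_cons.1 hsmem with h' | h'
      · left; omega
      · rcases List.mem_cons.1 h' with h'' | h''
        · right; omega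
        · simp at h''
  show ((List.range (canonicalBraiding n N).length).filter _).map _ = _
  rw [List.filter_congr hpred, canonical_length, filter_range_single (by omega : x - 1 < n)]
  simp
  omega

lemma sBlock_canonical_nil {n : ℕ} {N : List ℕ} (hN : IsName n N) {s : ℕ} (hs : N.length ≤ s) :
    sBlock (canonicalBraiding n N) s = [] := by
  rw [sBlock, List.filter_eq_nil_iff.2, List.map_nil]
  intro t htr
  rw [List.mem_range, canonical_length] at htr
  rw [canonical_getD htr]
  obtain ⟨q1, q2, h12, h2len, heq⟩ := positionsOf_two hN (by omega : 1 ≤ t + 1) (by omega)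
  rw [heq]
  simp only [List.getD_cons_zero, List.getD_cons_succ]
  simp
  omega

lemma standardName_canonical {n : ℕ} {N : List ℕ} (hN : IsName n N) :
    standardName (2 * n + 1) (canonicalBraiding n N) = N := by
  have hsn : standardName (2 * n + 1) (canonicalBraiding n N) =
      (List.range (2 * n + 1)).flatMap (sBlock (canonicalBraiding n N)) := rfl
  rw [hsn, List.range_succ, List.flatMap_append, List.flatMap_singleton,
    sBlock_canonical_nil hN (le_of_eq hN.1), List.append_nil]
  have hlen : N.length = 2 * n := hN.1
  have hcg : (List.range (2 * n)).flatMap (sBlock (canonicalBraiding n N)) =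
      (List.range (2 * n)).flatMap (fun s => [N.getD s 0]) := by
    apply flatMap_congr'
    intro s hsr
    rw [List.mem_range] at hsr
    exact sBlock_canonical_eq hN (by omega)
  rw [hcg, ← hlen]
  have : (List.range N.length).flatMap (fun s => [N.getD s 0]) =
      (List.range N.length).map (fun s => N.getD s 0) := by
    induction (List.range N.length) with
    | nil => simp
    | cons a t ih => rw [List.flatMap_cons, List.map_cons, ih]; rfl
  rw [this, map_getD_range]

/-- If an `n`-diagram contains `p` pairwise parallel chords, then its
braid index is at least `p + 1`. -/
theorem braidIndex_ge_of_parallel (n p : ℕ) (N : List ℕ) (hN : IsName n N)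
    (S : Finset ℕ) (hS : S ⊆ Finset.Icc 1 n) (hcard : S.card = p)
    (hpar : ∀ r ∈ S, ∀ s ∈ S, r ≠ s → ¬Crosses N r s) :
    p + 1 ≤ braidIndex n N := by
  classical
  have hmem : (2 * n + 1) ∈ {m | 1 ≤ m ∧ ∃ W, IsBraiding n m W N} := by
    refine ⟨by omega, canonicalBraiding n N, canonical_isChordWord hN, 0, Equiv.refl ℕ,
      fun x h1 h2 => ⟨h1, h2⟩, ?_⟩
    rw [standardName_canonical hN]
    simp
  set m := braidIndex n N with hmdef
  have hbi : m ∈ {m | 1 ≤ m ∧ ∃ W, IsBraiding n m W N} := Nat.sInf_mem ⟨_, hmem⟩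
  obtain ⟨hm1, W, hW, k, σ, hσ, hNeq⟩ := hbi
  set M := standardName m W with hM
  have hmemM : ∀ x ∈ S, σ.symm x ∈ M := by
    intro x hx
    have hxIcc := hS hx
    rw [Finset.mem_Icc] at hxIcc
    have hcount : N.count x = 2 := hN.2 x hxIcc.1 hxIcc.2
    have hxN : x ∈ N := List.count_pos_iff.1 (by omega)
    rw [hNeq] at hxN
    obtain ⟨u, hu, hux⟩ := List.mem_map.1 hxN
    have huu : u = σ.symm x := by
      apply σ.injective
      rw [hux]
      simp
    rw [← huu]
    exact List.mem_rotate.1 hu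
  have hchord : ∀ r ∈ M, 1 ≤ r ∧ r - 1 < W.length := by
    intro r hr
    have hMf : M = (List.range m).flatMap (sBlock W) := rfl
    rw [hMf] at hr
    obtain ⟨s, _, hrs⟩ := List.mem_flatMap.1 hr
    simp only [sBlock, List.mem_map, List.mem_filter, List.mem_range] at hrs
    obtain ⟨t, ⟨ht, _⟩, rfl⟩ := hrs
    omega
  set S' := S.image (⇑σ.symm) with hS'
  have hcardS' : S'.card = p := by
    rw [hS', Finset.card_image_of_injective _ σ.symm.injective, hcard]
  have hSfacts : ∀ r ∈ S', σ r ∈ S ∧ 1 ≤ r ∧ r - 1 < W.length := by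
    intro r hr
    obtain ⟨x, hx, rfl⟩ := Finset.mem_image.1 hr
    have hs : σ (σ.symm x) = x := σ.apply_symm_apply x
    have hmm := hmemM x hx
    have hc := hchord _ hmm
    exact ⟨by rw [hs]; exact hx, hc.1, hc.2⟩
  have hbounds : ∀ r ∈ S', (W.getD (r - 1) (0, 0)).1 ∈ Finset.Icc 1 m ∧
      (W.getD (r - 1) (0, 0)).2 ∈ Finset.Icc 1 m ∧
      (W.getD (r - 1) (0, 0)).1 < (W.getD (r - 1) (0, 0)).2 := by
    intro r hr
    obtain ⟨_, _, hrW⟩ := hSfacts r hr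
    have hmemW : W.getD (r - 1) (0, 0) ∈ W := by
      rw [List.getD_eq_getElem _ _ hrW]
      exact List.getElem_mem hrW
    obtain ⟨h1, h2, h3⟩ := hW _ hmemW
    exact ⟨Finset.mem_Icc.2 ⟨h1, by omega⟩, Finset.mem_Icc.2 ⟨by omega, h3⟩, h2⟩
  have hparM : ∀ r ∈ S', ∀ s ∈ S', r < s →
      (((W.getD (r - 1) (0, 0)).1 ≤ (W.getD (s - 1) (0, 0)).1 ∧
        (W.getD (s - 1) (0, 0)).1 < (W.getD (r - 1) (0, 0)).2) ↔
      ((W.getD (r - 1) (0, 0)).1 ≤ (W.getD (s - 1) (0, 0)).2 ∧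
        (W.getD (s - 1) (0, 0)).2 < (W.getD (r - 1) (0, 0)).2)) := by
    intro r hr s hs hrs
    by_contra hx
    obtain ⟨hrS, hr1, hrW⟩ := hSfacts r hr
    obtain ⟨hsS, hs1, hsW⟩ := hSfacts s hs
    have hne : σ r ≠ σ s := fun h => by
      have := σ.injective h
      omega
    rcases crosses_of_xor hW hr1 hrW hs1 hsW hrs hx with h | h
    · exact hpar (σ r) hrS (σ s) hsS hne (crosses_transfer hNeq h)
    · exact hpar (σ s) hsS (σ r) hrS (Ne.symm hne) (crosses_transfer hNeq h)
  have hcore := core_count (fun r => (W.getD (r - 1) (0, 0)).1)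
    (fun r => (W.getD (r - 1) (0, 0)).2) S'.card S' (Finset.Icc 1 m) le_rfl hbounds hparM
  rw [Nat.card_Icc] at hcore
  omega
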